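/- Work with the model (𝒦,r) = (𝒦_s,r_s) for s sufficiently large. Fix A ⊆ ℤ² and a stable direction u ∈ 𝒮, and let s_u = max{⟨k,u⟩ : k ∈ 𝒦}. For x ∈ ℝ² and l ≥ 0, consider the rectangles R = x + (H̄_u ∩ H̄_{u+π/2} ∩ H̄_{u+π}(l) ∩ H̄_{u−π/2}(2s)), R₊ = x + (H̄_u(s_u) ∩ H̄_{u+π/2} ∩ ℍ_{u+π} ∩ H̄_{u−π/2}(2s)) and R₋ = x + (ℍ_u(−l) ∩ H̄_{u+π/2} ∩ H̄_{u+π}(l+s_u) ∩ H̄_{u−π/2}(2s)). If [A] ∩ R₋ = [A] ∩ R₊ = A ∩ R = ∅, then [A] ∩ R = ∅. -/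

import Mathlib

open Set MeasureTheory Filter
open scoped RealInnerProductSpace Pointwise ENNReal

noncomputable section

/-- The Euclidean plane. -/
abbrev E : Type := EuclideanSpace ℝ (Fin 2)

/-- The point of the plane with coordinates `(a, b)`. -/
def pt (a b : ℝ) : E := (WithLp.equiv 2 (Fin 2 → ℝ)).symm ![a, b]

/-- The integer lattice `ℤ²` viewed inside the plane. -/
def latt : Set E := {x : E | ∃ a b : ℤ, x = pt a b}

/-- One step of threshold bootstrap percolation on `ℤ²` with neighbourhood `𝒦` and threshold `r`. -/
def step (𝒦 : Set E) (r : ℕ) (A : Set E) : Set E :=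
  A ∪ {x : E | x ∈ latt ∧ r ≤ (((fun k => x + k) '' 𝒦) ∩ A).ncard}

/-- The bootstrap percolation closure `[A]` (of the lattice points of `A`). -/
def bpCl (𝒦 : Set E) (r : ℕ) (A : Set E) : Set E :=
  ⋃ t : ℕ, (step 𝒦 r)^[t] (A ∩ latt)

/-- One step of the bootstrap percolation dynamics restricted to the region `B`. -/
def stepIn (𝒦 : Set E) (r : ℕ) (B A : Set E) : Set E :=
  A ∪ {x : E | x ∈ B ∩ latt ∧ r ≤ (((fun k => x + k) '' 𝒦) ∩ A).ncard}

/-- The closure `[A]_B` of `A` under the dynamics restricted to `B`. -/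
def bpClIn (𝒦 : Set E) (r : ℕ) (B A : Set E) : Set E :=
  ⋃ t : ℕ, (stepIn 𝒦 r B)^[t] (A ∩ latt)

/-- Rotation of the plane by `π/2` around the origin. -/
def rot (x : E) : E := pt (-(x 1)) (x 0)

/-- A "nice" set `K`: convex, invariant under rotation by `π/2` about the origin,
with `max {‖k‖ : k ∈ K} = 1`. -/
structure NiceK (K : Set E) : Prop where
  convex : Convex ℝ K
  rotInv : ∀ x ∈ K, rot x ∈ K
  normMax : IsGreatest ((fun k : E => ‖k‖) '' K) 1

/-- The neighbourhood `𝒦_s = (sK) ∩ ℤ²`. -/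
def Ks (K : Set E) (s : ℝ) : Set E := (s • K) ∩ latt

/-- The threshold `r_s = 1 + min_{u ≠ 0} |{x ∈ 𝒦_s : ⟨x,u⟩ < 0}|`. -/
def rKs (K : Set E) (s : ℝ) : ℕ :=
  1 + sInf ((fun u : E => {x : E | x ∈ Ks K s ∧ (inner ℝ x u : ℝ) < 0}.ncard) '' {u : E | u ≠ 0})

/-- The neighbourhood `𝒦_□` of the two-neighbour model. -/
def Ksq : Set E := {pt 0 0, pt 1 0, pt (-1) 0, pt 0 1, pt 0 (-1)}

/-- The neighbourhood `𝒦_△` of the three-neighbour model on the triangular lattice. -/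
def Ktri : Set E := Ksq ∪ {pt 1 (-1), pt (-1) 1}

/-- The set `𝒮` of stable directions of the model `(𝒦, r)`. -/
def stableDirs (𝒦 : Set E) (r : ℕ) : Set E :=
  {u : E | ‖u‖ = 1 ∧ {x : E | x ∈ 𝒦 ∧ (inner ℝ x u : ℝ) < 0}.ncard < r}

/-- The box `Λ_t = [-t,t]² ∩ ℤ²`. -/
def lam (t : ℝ) : Set E := {x ∈ latt | |x 0| ≤ t ∧ |x 1| ≤ t}

/-- A set `V` is `κ`-connected if any two of its points are joined by a finite
sequence of points of `V` with consecutive points at distance at most `κ`. -/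
def ConnectedWithin (κ : ℝ) (V : Set E) : Prop :=
  ∀ x ∈ V, ∀ y ∈ V, ∃ (k : ℕ) (f : ℕ → E), f 0 = x ∧ f k = y ∧
    (∀ i ≤ k, f i ∈ V) ∧ ∀ i < k, dist (f i) (f (i + 1)) ≤ κ

/-- `A` contains a `κ`-connected set of `14` sites. -/
def HasConn14 (κ : ℝ) (A : Set E) : Prop :=
  ∃ V ⊆ A, ConnectedWithin κ V ∧ V.ncard = 14

/-- Projection of a set of lattice points of the plane to the torus `(ℤ/nℤ)²`. -/
def torSet (n : ℕ) (S : Set E) : Set (ZMod n × ZMod n) :=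
  {p | ∃ a b : ℤ, pt a b ∈ S ∧ p = ((a : ZMod n), (b : ZMod n))}

/-- One step of bootstrap percolation on the torus `(ℤ/nℤ)²`. -/
def stepT (n : ℕ) (𝒦 : Set E) (r : ℕ) (A : Set (ZMod n × ZMod n)) : Set (ZMod n × ZMod n) :=
  A ∪ {x | r ≤ (((fun k => x + k) '' torSet n 𝒦) ∩ A).ncard}

/-- The bootstrap percolation closure on the torus `(ℤ/nℤ)²`. -/
def bpClT (n : ℕ) (𝒦 : Set E) (r : ℕ) (A : Set (ZMod n × ZMod n)) : Set (ZMod n × ZMod n) :=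
  ⋃ t : ℕ, (stepT n 𝒦 r)^[t] A

/-- The set `A(t)` of the first `t` sites of the torus in the order given by `σ`. -/
def Aset (n : ℕ) (σ : (ZMod n × ZMod n) ≃ Fin (n ^ 2)) (t : ℕ) : Set (ZMod n × ZMod n) :=
  {x | (σ x : ℕ) + 1 ≤ t}

/-- The percolation time `τ`. -/
def percTime (n : ℕ) (𝒦 : Set E) (r : ℕ) (σ : (ZMod n × ZMod n) ≃ Fin (n ^ 2)) : ℕ :=
  sInf {t : ℕ | bpClT n 𝒦 r (Aset n σ t) = univ}

/-- The probability (over a uniformly random bijection `σ : 𝕋 → {1,…,n²}`) that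
`|[A(τ-1)]| ≥ τ (1 + C / log n)`. -/
def probBad (𝒦 : Set E) (r : ℕ) (C : ℝ) (n : ℕ) : ℝ :=
  ({σ : (ZMod n × ZMod n) ≃ Fin (n ^ 2) |
      (percTime n 𝒦 r σ : ℝ) * (1 + C / Real.log n) ≤
        ((bpClT n 𝒦 r (Aset n σ (percTime n 𝒦 r σ - 1))).ncard : ℝ)}.ncard : ℝ) /
    (Nat.card ((ZMod n × ZMod n) ≃ Fin (n ^ 2)) : ℝ)

/-- The rectangle with corner `x`, side of length `len` in direction `rot u`
(perpendicular to `u`) and side of length `wid` in direction `u`. -/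
def rectDir (x u : E) (len wid : ℝ) : Set E :=
  {y : E | ∃ a b : ℝ, a ∈ Icc (0 : ℝ) len ∧ b ∈ Icc (0 : ℝ) wid ∧ y = x + a • rot u + b • u}

/-- The axis-parallel square `[a, a+c] × [b, b+c]`. -/
def axSquare (a b c : ℝ) : Set E := {x : E | x 0 ∈ Icc a (a + c) ∧ x 1 ∈ Icc b (b + c)}

/-- Droplets for the family `S` of stable directions: `D = ℤ² ∩ ⋂_{u ∈ S} {⟨·,u⟩ ≤ l_u}`. -/
def IsDropletS (S : Set E) (D : Set E) : Prop :=
  ∃ l : E → ℝ, D = latt ∩ ⋂ u ∈ S, {x : E | (inner ℝ x u : ℝ) ≤ l u}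

/-- The stable directions `𝒮_□` of the two-neighbour model. -/
def Ssq : Set E := {pt 1 0, pt (-1) 0, pt 0 1, pt 0 (-1)}

/-- The stable directions `𝒮_△` of the triangular three-neighbour model. -/
def Stri : Set E :=
  Ssq ∪ {pt ((Real.sqrt 2)⁻¹) ((Real.sqrt 2)⁻¹), pt (-(Real.sqrt 2)⁻¹) (-(Real.sqrt 2)⁻¹)}

/-- A valid choice of infection sets `𝒦_v ⊆ A_t ∩ (𝒦 + v)` of size `r`, one for each
newly infected vertex `v`. -/
def IsInfChoice (𝒦 : Set E) (r : ℕ) (A : Set E) (κ : E → Set E) : Prop :=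
  ∀ t : ℕ, ∀ v ∈ (step 𝒦 r)^[t + 1] (A ∩ latt) \ (step 𝒦 r)^[t] (A ∩ latt),
    κ v ⊆ (step 𝒦 r)^[t] (A ∩ latt) ∩ ((fun k => v + k) '' 𝒦) ∧ (κ v).ncard = r

/-- The out-degree of `u` in the infection graph determined by the choice `κ`. -/
def outDeg (𝒦 : Set E) (r : ℕ) (A : Set E) (κ : E → Set E) (u : E) : ℕ :=
  {v : E | (∃ t : ℕ, v ∈ (step 𝒦 r)^[t + 1] (A ∩ latt) \ (step 𝒦 r)^[t] (A ∩ latt)) ∧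
    u ∈ κ v}.ncard

/-- A vertex of `[A]` is good if its out-degree in the infection graph is at least `0.9 r`. -/
def IsGood (𝒦 : Set E) (r : ℕ) (A : Set E) (κ : E → Set E) (u : E) : Prop :=
  u ∈ bpCl 𝒦 r A ∧ (0.9 : ℝ) * r ≤ (outDeg 𝒦 r A κ u : ℝ)

/-- A fat convex set: bounded, convex, and all vertical and horizontal chords have
length at least `c`. -/
def IsFat (c : ℝ) (P : Set E) : Prop :=
  Convex ℝ P ∧ Bornology.IsBounded P ∧
  (∀ a : ℝ, (P ∩ {p : E | p 0 = a}).Nonempty → c ≤ Metric.diam (P ∩ {p : E | p 0 = a})) ∧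
  (∀ b : ℝ, (P ∩ {p : E | p 1 = b}).Nonempty → c ≤ Metric.diam (P ∩ {p : E | p 1 = b}))

def xmin (P : Set E) : ℝ := sInf ((fun p : E => p 0) '' P)
def xmax (P : Set E) : ℝ := sSup ((fun p : E => p 0) '' P)
def ymin (P : Set E) : ℝ := sInf ((fun p : E => p 1) '' P)
def ymax (P : Set E) : ℝ := sSup ((fun p : E => p 1) '' P)

/-- A convex set is horizontal if its horizontal extent is at least its vertical extent. -/
def IsHorizontal (P : Set E) : Prop := ymax P - ymin P ≤ xmax P - xmin P

/-- The upper boundary function of `P`. -/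
def upperF (P : Set E) (a : ℝ) : ℝ := sSup {y : ℝ | pt a y ∈ P}

/-- The lower boundary function of `P`. -/
def lowerF (P : Set E) (a : ℝ) : ℝ := sInf {y : ℝ | pt a y ∈ P}

/-- Slopes of tangent (supporting) lines to the upper boundary of `P` at abscissa `a`. -/
def upperSlopes (P : Set E) (a : ℝ) : Set ℝ :=
  {m : ℝ | ∀ t : ℝ, {y : ℝ | pt t y ∈ P}.Nonempty → upperF P t ≤ upperF P a + m * (t - a)}

/-- Slopes of tangent (supporting) lines to the lower boundary of `P` at abscissa `a`. -/
def lowerSlopes (P : Set E) (a : ℝ) : Set ℝ :=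
  {m : ℝ | ∀ t : ℝ, {y : ℝ | pt t y ∈ P}.Nonempty → lowerF P a + m * (t - a) ≤ lowerF P t}

/-- The vertical chord `P_{1,a}` is admissible: the tangent angles at the chord are in
`[-4π/9, 4π/9]` and the tangent slopes barely change at horizontal distance `C₄ s`. -/
def IsAdmissible (C₃ C₄ s : ℝ) (P : Set E) (a : ℝ) : Prop :=
  xmin P + C₄ * s < a ∧ a < xmax P - C₄ * s ∧ (∃ y : ℝ, pt a y ∈ P) ∧
  (∀ m ∈ upperSlopes P a, |Real.arctan m| ≤ 4 * Real.pi / 9) ∧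
  (∀ m ∈ lowerSlopes P a, |Real.arctan m| ≤ 4 * Real.pi / 9) ∧
  (∀ m₁ ∈ upperSlopes P (a - C₄ * s), ∀ m₂ ∈ upperSlopes P (a + C₄ * s),
    Real.arctan m₁ - Real.arctan m₂ ≤ 1 / C₃) ∧
  (∀ m₁ ∈ lowerSlopes P (a - C₄ * s), ∀ m₂ ∈ lowerSlopes P (a + C₄ * s),
    Real.arctan m₂ - Real.arctan m₁ ≤ 1 / C₃)

/-- The set `𝒬` of quasi-stable directions. -/
def quasiStable (s : ℝ) : Set E :=
  {u : E | ‖u‖ = 1 ∧ ∃ a b : ℤ, |(a : ℝ)| ≤ s ∧ |(b : ℝ)| ≤ s ∧ pt a b ≠ 0 ∧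
    ∃ c : ℝ, pt a b = c • u}

/-- The (possibly improper) half-plane `{⟨·,u⟩ ≤ l}` for `l ∈ ℝ ∪ {±∞}`. -/
def ehs (u : E) (l : EReal) : Set E := {x : E | (((inner ℝ x u : ℝ) : ℝ) : EReal) ≤ l}

/-- The droplet with radii `l : E → EReal` (indexed by the quasi-stable directions). -/
def dropletOf (s : ℝ) (l : E → EReal) : Set E := ⋂ u ∈ quasiStable s, ehs u (l u)

/-- `D` is a droplet for the quasi-stable directions. -/
def IsDropletQ (s : ℝ) (D : Set E) : Prop := ∃ l : E → EReal, D = dropletOf s l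

/-- The tight radius of `D` in direction `u`. -/
def tight (D : Set E) (u : E) : EReal := sSup ((fun x : E => (((inner ℝ x u : ℝ) : ℝ) : EReal)) '' D)

/-- The `u`-side of a droplet `D`. -/
def uside (u : E) (D : Set E) : Set E := {x ∈ D | ∀ y ∈ D, (inner ℝ y u : ℝ) ≤ (inner ℝ x u : ℝ)}

/-- A non-degenerate droplet: each `u`-side has length at least `C^{1/3}` for unstable
`u ∈ 𝒬` and at least `C^{1/2}` for stable `u ∈ 𝒬`. -/
def IsNondeg (s C : ℝ) (𝒦 : Set E) (r : ℕ) (D : Set E) : Prop :=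
  IsDropletQ s D ∧ ∀ u ∈ quasiStable s,
    (u ∉ stableDirs 𝒦 r → C ^ ((1 : ℝ) / 3) ≤ Metric.diam (uside u D)) ∧
    (u ∈ stableDirs 𝒦 r → C ^ ((1 : ℝ) / 2) ≤ Metric.diam (uside u D))

/-- The droplet obtained from `D` by replacing its tight radius in direction `v` by `m`. -/
def extDroplet (s : ℝ) (v : E) (D : Set E) (m : EReal) : Set E :=
  (⋂ u ∈ quasiStable s \ {v}, ehs u (tight D u)) ∩ ehs v m

/-- `D'` is the `v`-extension of the droplet `D`. -/
def IsExtension (s : ℝ) (v : E) (D D' : Set E) : Prop :=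
  ∃ l' : EReal, tight D v < l' ∧ D' = extDroplet s v D l' ∧
    ((D' \ D) ∩ latt).Nonempty ∧
    ∀ m : EReal, tight D v < m → ((extDroplet s v D m \ D) ∩ latt).Nonempty → l' ≤ m

/-- Rotation of the plane by the angle `θ`. -/
def rotA (θ : ℝ) (u : E) : E :=
  pt (Real.cos θ * u 0 - Real.sin θ * u 1) (Real.sin θ * u 0 + Real.cos θ * u 1)

/-- The closed half-plane `H̄_u(l)`. -/
def hs (u : E) (l : ℝ) : Set E := {x : E | (inner ℝ x u : ℝ) ≤ l}

/-- The open half-plane `ℍ_u(l)`. -/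
def hso (u : E) (l : ℝ) : Set E := {x : E | (inner ℝ x u : ℝ) < l}

/-- Translate of a set. -/
def transl (x : E) (S : Set E) : Set E := (fun y => x + y) '' S

/-- The rectangle `x + (H̄_u ∩ H̄_{u+π/2} ∩ H̄_{u+π}(wid) ∩ H̄_{u-π/2}(len))`. -/
def rectHS (x u : E) (wid len : ℝ) : Set E :=
  transl x (hs u 0 ∩ hs (rotA (Real.pi / 2) u) 0 ∩ hs (rotA Real.pi u) wid ∩
    hs (rotA (-(Real.pi / 2)) u) len)

end

/-!
By induction on time. A site `y ∈ R` infected at time `t + 1` has `r` infected neighbours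
`y + k`, none in `R` by induction and none in `R₋ ∪ R₊` by hypothesis. In the frame `(u, rot u)`
at `x`, the rectangles `R₋`, `R`, `R₊` tile the strip `[-l - s_u, s_u] × [-2s, 0]`, and since
`|⟨k, u⟩| ≤ s_u`, every neighbour `y + k` leaves this strip only across one of its long sides.
As `|⟨k, rot u⟩| ≤ s` and the strip has width `2s`, all infected neighbours cross the same side,
so they lie in `y + ℍ_v` for `v = rot u` or `v = -rot u`. These directions are stable, as `𝒦`
is invariant under `rot`, so there are fewer than `r` such neighbours.
-/

open scoped RealInnerProductSpace

section Closure

variable {𝒦 : Set E} {r : ℕ} {A R : Set E}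

theorem iterate_step_subset_bpCl (t : ℕ) : (step 𝒦 r)^[t] (A ∩ latt) ⊆ bpCl 𝒦 r A :=
  subset_iUnion (fun t => (step 𝒦 r)^[t] (A ∩ latt)) t

theorem disjoint_bpCl_of_ncard_lt (h𝒦 : 𝒦.Finite) (hA : Disjoint A R)
    (hR : ∀ y ∈ R, (((y + ·) '' 𝒦) ∩ (bpCl 𝒦 r A \ R)).ncard < r) :
    Disjoint (bpCl 𝒦 r A) R := by
  suffices h : ∀ t, Disjoint ((step 𝒦 r)^[t] (A ∩ latt)) R from disjoint_iUnion_left.mpr h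
  intro t
  induction t with
  | zero => exact hA.mono_left inter_subset_left
  | succ t ih =>
    rw [Function.iterate_succ_apply', step, disjoint_union_left]
    refine ⟨ih, disjoint_left.mpr fun y ⟨_, hcard⟩ hy => (hR y hy).not_ge ?_⟩
    have hsub : (step 𝒦 r)^[t] (A ∩ latt) ⊆ bpCl 𝒦 r A \ R :=
      fun z hz => ⟨iterate_step_subset_bpCl t hz, disjoint_left.mp ih hz⟩
    exact hcard.trans (ncard_le_ncard (inter_subset_inter_right _ hsub)
      ((h𝒦.image _).inter_of_left _))

end Closure

theorem ncard_image_add_inter_le {𝒦 S : Set E} (h𝒦 : 𝒦.Finite) {y v : E}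
    (h : ∀ k ∈ 𝒦, y + k ∈ S → ⟪k, v⟫ < 0) :
    (((y + ·) '' 𝒦) ∩ S).ncard ≤ {k : E | k ∈ 𝒦 ∧ ⟪k, v⟫ < 0}.ncard := by
  have hsub : ((y + ·) '' 𝒦) ∩ S ⊆ (y + ·) '' {k : E | k ∈ 𝒦 ∧ ⟪k, v⟫ < 0} := by
    rintro _ ⟨⟨k, hk, rfl⟩, hkS⟩
    exact ⟨k, ⟨hk, h k hk hkS⟩, rfl⟩
  refine (ncard_le_ncard hsub ((h𝒦.subset fun k hk => hk.1).image _)).trans ?_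
  rw [ncard_image_of_injective _ (add_right_injective y)]

-- The two sides of the gap are more than `2 s` apart, so no two values `f i` reach both.
theorem forall_pos_or_forall_neg_of_gap {ι : Type*} {t : Set ι} {f : ι → ℝ} {c s : ℝ}
    (hc : c ∈ Icc (-(2 * s)) 0) (hf : ∀ i ∈ t, |f i| ≤ s)
    (hgap : ∀ i ∈ t, c + f i ∉ Icc (-(2 * s)) 0) :
    (∀ i ∈ t, 0 < f i) ∨ ∀ i ∈ t, f i < 0 := by
  by_contra! ⟨⟨i, hi, hfi⟩, ⟨j, hj, hfj⟩⟩
  have hi' := hgap i hi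
  have hj' := hgap j hj
  simp only [mem_Icc, not_and_or, not_le] at hc hi' hj'
  have := abs_le.mp (hf i hi)
  have := abs_le.mp (hf j hj)
  rcases hi' with hi' | hi' <;> rcases hj' with hj' | hj' <;> linarith

section Rotation

@[simp] theorem pt_zero (a b : ℝ) : pt a b 0 = a := rfl
@[simp] theorem pt_one (a b : ℝ) : pt a b 1 = b := rfl
@[simp] theorem rot_zero (x : E) : rot x 0 = -x 1 := rfl
@[simp] theorem rot_one (x : E) : rot x 1 = x 0 := rfl

theorem ext_fin_two {x y : E} (h0 : x 0 = y 0) (h1 : x 1 = y 1) : x = y := by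
  ext i; fin_cases i <;> assumption

theorem inner_eq_fin_two (x y : E) : ⟪x, y⟫ = x 0 * y 0 + x 1 * y 1 := by
  simp [PiLp.inner_apply, Fin.sum_univ_two, mul_comm]

theorem inner_rot_rot (x y : E) : ⟪rot x, rot y⟫ = ⟪x, y⟫ := by
  simp only [inner_eq_fin_two, rot_zero, rot_one]; ring

theorem rot_rot (x : E) : rot (rot x) = -x :=
  ext_fin_two (by simp) (by simp)

theorem rot_neg (x : E) : rot (-x) = -rot x :=
  ext_fin_two (by simp) (by simp)

theorem norm_rot (x : E) : ‖rot x‖ = ‖x‖ := by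
  rw [norm_eq_sqrt_real_inner, norm_eq_sqrt_real_inner, inner_rot_rot]

theorem rot_injective : Function.Injective rot := fun x y h =>
  neg_inj.mp (by rw [← rot_rot, h, rot_rot])

@[simp] theorem rotA_pi_div_two (u : E) : rotA (Real.pi / 2) u = rot u :=
  ext_fin_two (by simp [rotA]) (by simp [rotA])

@[simp] theorem rotA_pi (u : E) : rotA Real.pi u = -u :=
  ext_fin_two (by simp [rotA]) (by simp [rotA])

@[simp] theorem rotA_neg_pi_div_two (u : E) : rotA (-(Real.pi / 2)) u = -rot u :=
  ext_fin_two (by simp [rotA]) (by simp [rotA])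

variable {𝒦 : Set E} {r : ℕ}

theorem neg_mem_of_rot_mem (hrot : ∀ k ∈ 𝒦, rot k ∈ 𝒦) {k : E} (hk : k ∈ 𝒦) : -k ∈ 𝒦 :=
  rot_rot k ▸ hrot _ (hrot _ hk)

theorem ncard_inner_rot_neg (hrot : ∀ k ∈ 𝒦, rot k ∈ 𝒦) (w : E) :
    {k : E | k ∈ 𝒦 ∧ ⟪k, rot w⟫ < 0}.ncard = {k : E | k ∈ 𝒦 ∧ ⟪k, w⟫ < 0}.ncard := by
  have him : {k : E | k ∈ 𝒦 ∧ ⟪k, rot w⟫ < 0} = rot '' {k : E | k ∈ 𝒦 ∧ ⟪k, w⟫ < 0} := by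
    ext k
    constructor
    · rintro ⟨hk, hlt⟩
      refine ⟨-rot k, ⟨neg_mem_of_rot_mem hrot (hrot k hk), ?_⟩, by rw [rot_neg, rot_rot, neg_neg]⟩
      rwa [← inner_rot_rot, rot_neg, rot_rot, neg_neg]
    · rintro ⟨k, ⟨hk, hlt⟩, rfl⟩
      exact ⟨hrot k hk, by rwa [inner_rot_rot]⟩
  rw [him, ncard_image_of_injective _ rot_injective]

theorem rot_mem_stableDirs (hrot : ∀ k ∈ 𝒦, rot k ∈ 𝒦) {u : E} (hu : u ∈ stableDirs 𝒦 r) :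
    rot u ∈ stableDirs 𝒦 r :=
  ⟨(norm_rot u).trans hu.1, (ncard_inner_rot_neg hrot u).trans_lt hu.2⟩

end Rotation

theorem mem_transl {x y : E} {S : Set E} : y ∈ transl x S ↔ y - x ∈ S :=
  ⟨by rintro ⟨z, hz, rfl⟩; simpa using hz, fun h => ⟨y - x, h, add_sub_cancel x y⟩⟩

theorem mem_rectHS_iff {x u w : E} {wid len : ℝ} :
    w ∈ rectHS x u wid len ↔ ⟪w - x, u⟫ ∈ Icc (-wid) 0 ∧ ⟪w - x, rot u⟫ ∈ Icc (-len) 0 := by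
  simp only [rectHS, mem_transl, hs, mem_inter_iff, mem_ofPred_eq, rotA_pi_div_two, rotA_pi,
    rotA_neg_pi_div_two, inner_neg_right, mem_Icc, neg_le]
  tauto

theorem abs_inner_le_sSup {𝒦 : Set E} (h𝒦 : 𝒦.Finite) (hneg : ∀ k ∈ 𝒦, -k ∈ 𝒦) (u : E)
    {k : E} (hk : k ∈ 𝒦) : |⟪k, u⟫| ≤ sSup ((fun k : E => ⟪k, u⟫) '' 𝒦) := by
  have hle : ∀ k ∈ 𝒦, ⟪k, u⟫ ≤ sSup ((fun k : E => ⟪k, u⟫) '' 𝒦) :=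
    fun k hk => le_csSup (h𝒦.image _).bddAbove ⟨k, hk, rfl⟩
  refine abs_le.mpr ⟨?_, hle k hk⟩
  have := hle _ (hneg k hk)
  rw [inner_neg_left] at this
  linarith

theorem bpCl_inter_rectHS_eq_empty {𝒦 : Set E} {r : ℕ} {s : ℝ} (h𝒦 : 𝒦.Finite)
    (hrot : ∀ k ∈ 𝒦, rot k ∈ 𝒦) (hnorm : ∀ k ∈ 𝒦, ‖k‖ ≤ s) {A : Set E} {u : E}
    (hu : u ∈ stableDirs 𝒦 r) (x : E) (l : ℝ)
    (hminus : bpCl 𝒦 r A ∩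
      transl x (hso u (-l) ∩ hs (rotA (Real.pi / 2) u) 0 ∩
        hs (rotA Real.pi u) (l + sSup ((fun k : E => ⟪k, u⟫) '' 𝒦)) ∩
        hs (rotA (-(Real.pi / 2)) u) (2 * s)) = ∅)
    (hplus : bpCl 𝒦 r A ∩
      transl x (hs u (sSup ((fun k : E => ⟪k, u⟫) '' 𝒦)) ∩
        hs (rotA (Real.pi / 2) u) 0 ∩ hso (rotA Real.pi u) 0 ∩
        hs (rotA (-(Real.pi / 2)) u) (2 * s)) = ∅)
    (hA : A ∩ rectHS x u l (2 * s) = ∅) :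
    bpCl 𝒦 r A ∩ rectHS x u l (2 * s) = ∅ := by
  have hs_rot : ∀ k ∈ 𝒦, |⟪k, rot u⟫| ≤ s := fun k hk =>
    (abs_real_inner_le_norm k _).trans <| by rw [norm_rot, hu.1, mul_one]; exact hnorm k hk
  have hrot_stable := rot_mem_stableDirs hrot hu
  rw [← disjoint_iff_inter_eq_empty] at hminus hplus hA ⊢
  refine disjoint_bpCl_of_ncard_lt h𝒦 hA fun y hy => ?_
  obtain ⟨hy_u, hy_rot⟩ := mem_rectHS_iff.mp hy
  have hgap : ∀ k ∈ {k | k ∈ 𝒦 ∧ y + k ∈ bpCl 𝒦 r A \ rectHS x u l (2 * s)},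
      ⟪y - x, rot u⟫ + ⟪k, rot u⟫ ∉ Icc (-(2 * s)) 0 := by
    rintro k ⟨hk, hkA, hkR⟩ hk_rot
    have hdecomp : ∀ v, ⟪y + k - x, v⟫ = ⟪y - x, v⟫ + ⟪k, v⟫ := fun v => by
      rw [add_sub_right_comm, inner_add_left]
    have hku := abs_le.mp (abs_inner_le_sSup h𝒦 (fun k => neg_mem_of_rot_mem hrot) u hk)
    have hminus := disjoint_left.mp hminus hkA
    have hplus := disjoint_left.mp hplus hkA
    rw [mem_rectHS_iff, hdecomp, hdecomp] at hkR
    simp only [mem_transl, hs, hso, mem_inter_iff, mem_ofPred_eq, rotA_pi_div_two, rotA_pi,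
      rotA_neg_pi_div_two, inner_neg_right, hdecomp] at hminus hplus
    rw [mem_Icc] at hy_u hk_rot
    rcases lt_or_ge (⟪y - x, u⟫ + ⟪k, u⟫) (-l) with hlow | hlow
    · exact hminus ⟨⟨⟨hlow, by linarith⟩, by linarith⟩, by linarith⟩
    rcases le_or_gt (⟪y - x, u⟫ + ⟪k, u⟫) 0 with hhigh | hhigh
    · exact hkR ⟨⟨hlow, hhigh⟩, hk_rot⟩
    · exact hplus ⟨⟨⟨by linarith, by linarith⟩, by linarith⟩, by linarith⟩
  obtain hpos | hneg := forall_pos_or_forall_neg_of_gap hy_rot (fun k hk => hs_rot k hk.1) hgap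
  · have hneg_stable : -rot u ∈ stableDirs 𝒦 r :=
      rot_rot (rot u) ▸ rot_mem_stableDirs hrot (rot_mem_stableDirs hrot hrot_stable)
    refine (ncard_image_add_inter_le h𝒦 fun k hk hkS => ?_).trans_lt hneg_stable.2
    rw [inner_neg_right, neg_neg_iff_pos]
    exact hpos k ⟨hk, hkS⟩
  · exact (ncard_image_add_inter_le h𝒦 fun k hk hkS => hneg k ⟨hk, hkS⟩).trans_lt hrot_stable.2

theorem Ks_subset_closedBall {K : Set E} (hK : NiceK K) {s : ℝ} (hs : 0 ≤ s) :
    Ks K s ⊆ Metric.closedBall 0 s := by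
  rintro _ ⟨⟨k, hk, rfl⟩, -⟩
  rw [mem_closedBall_zero_iff, norm_smul, Real.norm_of_nonneg hs]
  exact mul_le_of_le_one_right hs (hK.normMax.2 ⟨k, hk, rfl⟩)

theorem rot_mem_Ks {K : Set E} (hK : NiceK K) {s : ℝ} {k : E} (hk : k ∈ Ks K s) :
    rot k ∈ Ks K s := by
  obtain ⟨⟨k, hkK, rfl⟩, a, b, hab⟩ := hk
  refine ⟨⟨rot k, hK.rotInv k hkK, ext_fin_two (by simp) (by simp)⟩, -b, a, ?_⟩
  rw [hab]
  exact ext_fin_two (by simp) (by simp)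

theorem Ks_finite {K : Set E} (hK : NiceK K) {s : ℝ} (hs : 0 ≤ s) : (Ks K s).Finite := by
  set n := ⌈s⌉
  refine ((finite_Icc (-n, -n) (n, n)).image fun p : ℤ × ℤ => pt p.1 p.2).subset ?_
  intro k hk
  have hn := mem_closedBall_zero_iff.mp (Ks_subset_closedBall hK hs hk)
  obtain ⟨a, b, rfl⟩ := hk.2
  have hcoord : ∀ c : ℤ, |(c : ℝ)| ≤ s → -n ≤ c ∧ c ≤ n := fun c hc =>
    abs_le.mp (by exact_mod_cast hc.trans (Int.le_ceil s))
  obtain ⟨ha₁, ha₂⟩ := hcoord a ((PiLp.norm_apply_le _ 0).trans hn)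
  obtain ⟨hb₁, hb₂⟩ := hcoord b ((PiLp.norm_apply_le _ 1).trans hn)
  exact ⟨(a, b), ⟨⟨ha₁, hb₁⟩, ⟨ha₂, hb₂⟩⟩, rfl⟩

theorem statement_15 (K : Set E) (hK : NiceK K) :
    ∃ s₀ : ℝ, ∀ s : ℝ, s₀ ≤ s →
      ∀ A : Set E, A ⊆ latt → ∀ u ∈ stableDirs (Ks K s) (rKs K s),
      ∀ x : E, ∀ l : ℝ, 0 ≤ l →
        bpCl (Ks K s) (rKs K s) A ∩
            transl x (hso u (-l) ∩ hs (rotA (Real.pi / 2) u) 0 ∩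
              hs (rotA Real.pi u) (l + sSup ((fun k : E => (inner ℝ k u : ℝ)) '' Ks K s)) ∩
              hs (rotA (-(Real.pi / 2)) u) (2 * s)) = ∅ →
        bpCl (Ks K s) (rKs K s) A ∩
            transl x (hs u (sSup ((fun k : E => (inner ℝ k u : ℝ)) '' Ks K s)) ∩
              hs (rotA (Real.pi / 2) u) 0 ∩ hso (rotA Real.pi u) 0 ∩
              hs (rotA (-(Real.pi / 2)) u) (2 * s)) = ∅ →
        A ∩ rectHS x u l (2 * s) = ∅ →
        bpCl (Ks K s) (rKs K s) A ∩ rectHS x u l (2 * s) = ∅ :=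
  ⟨0, fun s hs A _ u hu x l _ hminus hplus hA =>
    bpCl_inter_rectHS_eq_empty (Ks_finite hK hs) (fun _ => rot_mem_Ks hK)
      (fun k hk => mem_closedBall_zero_iff.mp (Ks_subset_closedBall hK hs hk)) hu x l
      hminus hplus hA⟩
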